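/- If λ = cos(φ) and v ∈ ℝ^{n+m} has coordinates v_i = sin(iφ), then v is an eigenvector of the blossom matrix A with eigenvalue λ if and only if sin(((2n+m+1)/2)φ)·cos(((m+1)/2)φ) = 0 (assuming v ≠ 0). -/
import Mathlib


open Real

/-- If λ = cos(φ) and v_i = sin(iφ), then v is an eigenvector of the blossom
matrix A with eigenvalue λ iff sin(((2n+m+1)/2)φ)·cos(((m+1)/2)φ) = 0
(assuming v ≠ 0). -/
theorem blossom_eigenvector_characterization (n m : ℕ) (hn : 1 ≤ n) (hm : 1 ≤ m)
    (φ : ℝ)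
    (A : Matrix (Fin (n + m)) (Fin (n + m)) ℝ)
    (hA : ∀ v : Fin (n + m) → ℝ,
      (A.mulVec v ⟨0, by omega⟩ = v ⟨1, by omega⟩ / 2) ∧
      (∀ i : ℕ, ∀ _h1 : 0 < i, ∀ _h2 : i < n + m - 1,
        A.mulVec v ⟨i, by omega⟩
          = (v ⟨i - 1, by omega⟩ + v ⟨i + 1, by omega⟩) / 2) ∧
      (A.mulVec v ⟨n + m - 1, by omega⟩
        = (v ⟨n + m - 2, by omega⟩ - v ⟨n - 1, by omega⟩) / 2))
    (v : Fin (n + m) → ℝ)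
    (hv : ∀ i : Fin (n + m), v i = Real.sin ((i.val + 1 : ℝ) * φ))
    (hv0 : v ≠ 0) :
    A.mulVec v = Real.cos φ • v
      ↔ Real.sin ((2 * n + m + 1 : ℝ) / 2 * φ)
          * Real.cos ((m + 1 : ℝ) / 2 * φ) = 0 := by
  obtain ⟨h0, hmid, hlast⟩ := hA v
  have h2 : (2 : ℕ) ≤ n + m := by omega
  -- cast facts
  have c2 : ((n + m - 2 : ℕ) : ℝ) = (n : ℝ) + m - 2 := by
    rw [Nat.cast_sub h2]; push_cast; ring
  have c1 : ((n + m - 1 : ℕ) : ℝ) = (n : ℝ) + m - 1 := by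
    rw [Nat.cast_sub (by omega : 1 ≤ n + m)]; push_cast; ring
  have cn : ((n - 1 : ℕ) : ℝ) = (n : ℝ) - 1 := by
    rw [Nat.cast_sub hn]; push_cast; ring
  -- values of v at the relevant indices
  have vlast : v ⟨n + m - 1, by omega⟩ = Real.sin (((n : ℝ) + m) * φ) := by
    rw [hv]; congr 1; rw [c1]; ring
  have vlast2 : v ⟨n + m - 2, by omega⟩ = Real.sin (((n : ℝ) + m - 1) * φ) := by
    rw [hv]; congr 1; rw [c2]; ring
  have vn : v ⟨n - 1, by omega⟩ = Real.sin ((n : ℝ) * φ) := by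
    rw [hv]; congr 1; rw [cn]; ring
  -- trig identities
  have e1 : Real.cos φ * Real.sin (((n : ℝ) + m) * φ)
      = (Real.sin (((n : ℝ) + m + 1) * φ) + Real.sin (((n : ℝ) + m - 1) * φ)) / 2 := by
    rw [show ((n : ℝ) + m + 1) * φ = ((n : ℝ) + m) * φ + φ by ring,
      show ((n : ℝ) + m - 1) * φ = ((n : ℝ) + m) * φ - φ by ring,
      Real.sin_add, Real.sin_sub]
    ring
  have e2 : Real.sin (((n : ℝ) + m + 1) * φ) + Real.sin ((n : ℝ) * φ)
      = 2 * Real.sin ((2 * n + m + 1 : ℝ) / 2 * φ) * Real.cos ((m + 1 : ℝ) / 2 * φ) := by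
    rw [show ((n : ℝ) + m + 1) * φ
          = (2 * n + m + 1 : ℝ) / 2 * φ + (m + 1 : ℝ) / 2 * φ by ring,
      show (n : ℝ) * φ
          = (2 * n + m + 1 : ℝ) / 2 * φ - (m + 1 : ℝ) / 2 * φ by ring,
      Real.sin_add, Real.sin_sub]
    ring
  constructor
  · intro h
    have hx := congrFun h ⟨n + m - 1, by omega⟩
    rw [hlast, Pi.smul_apply, smul_eq_mul, vlast, vlast2, vn] at hx
    nlinarith [e1, e2]
  · intro hprod
    funext i
    obtain ⟨i, hi⟩ := i
    rw [Pi.smul_apply, smul_eq_mul]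
    rcases eq_or_ne i 0 with rfl | hne0
    · rw [h0, hv, hv]
      norm_num
      rw [show (2 : ℝ) * φ = 2 * φ by ring, Real.sin_two_mul]
      ring
    · rcases eq_or_ne i (n + m - 1) with rfl | hnelast
      · rw [hlast, vlast, vlast2, vn]
        nlinarith [e1, e2]
      · have hi1 : 0 < i := Nat.pos_of_ne_zero hne0
        have hi2 : i < n + m - 1 := by omega
        rw [hmid i hi1 hi2, hv, hv, hv]
        have ci : ((i - 1 : ℕ) : ℝ) = (i : ℝ) - 1 := by
          rw [Nat.cast_sub hi1]; push_cast; ring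
        rw [ci]
        push_cast
        rw [show ((i : ℝ) - 1 + 1) * φ = ((i : ℝ) + 1) * φ - φ by ring,
          show ((i : ℝ) + 1 + 1) * φ = ((i : ℝ) + 1) * φ + φ by ring,
          Real.sin_add, Real.sin_sub]
        ring
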